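/- Let η > 0, m ∈ ℝ, and v ≥ 0. Let μ = gaussianReal m v, and let μ_ref = gaussianReal (η · ⌊m/η⌋) (η² · ⌊v/η²⌋) be the reference Gaussian obtained by rounding the mean down to the grid ηℤ and the variance down to the grid η²ℤ (with ⌊·⌋ the integer floor). Then for every 1-Lipschitz function h : ℝ → ℝ that is integrable with respect to both μ and μ_ref, |∫ h dμ − ∫ h dμ_ref| ≤ √2 · η. -/

import Mathlib

open MeasureTheory ProbabilityTheory NNReal

/-! Write both Gaussians as images `m + √v * Z` of one standard Gaussian `Z`. For a `K`-Lipschitz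
`h` this coupling bounds the difference of the integrals by `K * 𝔼|Δm + Δσ * Z|`, which is at most
`K * √(Δm² + Δσ²)` since `𝔼|X| ≤ √(𝔼 X²)`. Rounding moves the mean by at most `η` and, because
`|√a - √b| ≤ √|a - b|`, moving the variance by at most `η²` moves the standard deviation by at
most `η`. -/

theorem Int.abs_sub_mul_floor_div_le {k : Type*} [Field k] [LinearOrder k] [IsOrderedRing k]
    [FloorRing k] (a : k) {b : k} (hb : 0 < b) : |a - b * ⌊a / b⌋| ≤ b := by
  rw [mul_comm, abs_of_nonneg (Int.sub_floor_div_mul_nonneg a hb)]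
  exact (Int.sub_floor_div_mul_lt a hb).le

theorem Real.abs_sqrt_sub_sqrt_le (x y : ℝ) : |√x - √y| ≤ √|x - y| := by
  have hsum : |√x - √y| ≤ √x + √y :=
    abs_sub_le_iff.2 ⟨by linarith [sqrt_nonneg y], by linarith [sqrt_nonneg x]⟩
  refine Real.le_sqrt_of_sq_le ?_
  calc |√x - √y| ^ 2 ≤ |√x - √y| * (√x + √y) := by rw [sq]; gcongr
    _ = |√x ^ 2 - √y ^ 2| := by
      rw [sq_sub_sq, abs_mul, abs_of_nonneg (by positivity : 0 ≤ √x + √y), mul_comm]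
    _ = |max x 0 - max y 0| := by rw [Real.sq_sqrt', Real.sq_sqrt']
    _ ≤ |x - y| := abs_max_sub_max_le_abs x y 0

section Coupling

variable {Ω : Type*} [MeasurableSpace Ω] {μ : Measure Ω}

theorem integral_abs_le_sqrt_integral_sq [IsProbabilityMeasure μ] {f : Ω → ℝ} (hf : MemLp f 2 μ) :
    ∫ ω, |f ω| ∂μ ≤ √(∫ ω, f ω ^ 2 ∂μ) := by
  refine Real.le_sqrt_of_sq_le ?_
  have hvar := variance_nonneg |f| μ
  rw [variance_eq_sub hf.abs] at hvar
  simpa [sq_abs] using hvar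

theorem abs_integral_comp_sub_integral_comp_le {K : ℝ≥0} {h : ℝ → ℝ} (hh : LipschitzWith K h)
    {X Y : Ω → ℝ} (hX : Integrable (fun ω => h (X ω)) μ) (hY : Integrable (fun ω => h (Y ω)) μ)
    (hXY : Integrable (fun ω => X ω - Y ω) μ) :
    |∫ ω, h (X ω) ∂μ - ∫ ω, h (Y ω) ∂μ| ≤ K * ∫ ω, |X ω - Y ω| ∂μ := by
  rw [← integral_sub hX hY, ← integral_const_mul]
  refine abs_integral_le_integral_abs.trans <|
    integral_mono (hX.sub hY).abs (hXY.abs.const_mul _) fun ω => ?_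
  simpa [Real.dist_eq] using hh.dist_le_mul (X ω) (Y ω)

end Coupling

theorem integral_sq_gaussianReal (m : ℝ) (v : ℝ≥0) :
    ∫ x, x ^ 2 ∂gaussianReal m v = m ^ 2 + v := by
  have hvar := variance_eq_sub (memLp_id_gaussianReal' (μ := m) (v := v) 2 (by norm_num))
  simp only [variance_id_gaussianReal, Pi.pow_apply, id_eq, integral_id_gaussianReal] at hvar
  linarith

theorem gaussianReal_map_const_add_mul (a b m : ℝ) (v : ℝ≥0) :
    (gaussianReal m v).map (fun x => a + b * x) =
      gaussianReal (a + b * m) (‖b‖₊ ^ 2 * v) := by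
  rw [show (fun x => a + b * x) = (a + ·) ∘ (b * ·) from rfl,
    ← Measure.map_map (by fun_prop) (by fun_prop), gaussianReal_map_const_mul,
    gaussianReal_map_const_add, add_comm]
  congr 2
  ext
  simp

theorem gaussianReal_eq_map_std (m : ℝ) (v : ℝ≥0) :
    gaussianReal m v = (gaussianReal 0 1).map (fun x => m + √v * x) := by
  rw [gaussianReal_map_const_add_mul]
  congr
  · simp
  · ext; simp

theorem integral_abs_const_add_mul_std_gaussianReal_le (a b : ℝ) :
    ∫ x, |a + b * x| ∂gaussianReal 0 1 ≤ √(a ^ 2 + b ^ 2) := by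
  have hmap := gaussianReal_map_const_add_mul a b 0 1
  rw [mul_zero, add_zero, mul_one] at hmap
  calc ∫ x, |a + b * x| ∂gaussianReal 0 1
      = ∫ y, |y| ∂gaussianReal a (‖b‖₊ ^ 2) := by
        rw [← hmap, integral_map (by fun_prop) (by fun_prop)]
    _ ≤ √(∫ y, y ^ 2 ∂gaussianReal a (‖b‖₊ ^ 2)) :=
        integral_abs_le_sqrt_integral_sq (memLp_id_gaussianReal' 2 (by norm_num))
    _ = √(a ^ 2 + b ^ 2) := by simp [integral_sq_gaussianReal]

theorem abs_integral_gaussianReal_sub_integral_gaussianReal_le {K : ℝ≥0} {h : ℝ → ℝ}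
    (hh : LipschitzWith K h) {m₁ m₂ : ℝ} {v₁ v₂ : ℝ≥0}
    (h₁ : Integrable h (gaussianReal m₁ v₁)) (h₂ : Integrable h (gaussianReal m₂ v₂)) :
    |∫ x, h x ∂gaussianReal m₁ v₁ - ∫ x, h x ∂gaussianReal m₂ v₂| ≤
      K * √((m₁ - m₂) ^ 2 + (√v₁ - √v₂) ^ 2) := by
  rw [gaussianReal_eq_map_std m₁ v₁] at h₁ ⊢
  rw [gaussianReal_eq_map_std m₂ v₂] at h₂ ⊢
  rw [integrable_map_measure hh.continuous.aestronglyMeasurable (by fun_prop)] at h₁ h₂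
  rw [integral_map (by fun_prop) hh.continuous.aestronglyMeasurable,
    integral_map (by fun_prop) hh.continuous.aestronglyMeasurable]
  have hXY : Integrable (fun x : ℝ => (m₁ - m₂) + (√v₁ - √v₂) * x) (gaussianReal 0 1) :=
    (integrable_const _).add <|
      ((memLp_id_gaussianReal' 1 (by norm_num)).integrable le_rfl).const_mul _
  calc _ ≤ K * ∫ x, |m₁ + √v₁ * x - (m₂ + √v₂ * x)| ∂gaussianReal 0 1 :=
        abs_integral_comp_sub_integral_comp_le hh h₁ h₂ (hXY.congr (ae_of_all _ fun x => by ring))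
    _ = K * ∫ x, |(m₁ - m₂) + (√v₁ - √v₂) * x| ∂gaussianReal 0 1 := by
        simp_rw [add_sub_add_comm, ← sub_mul]
    _ ≤ K * √((m₁ - m₂) ^ 2 + (√v₁ - √v₂) ^ 2) := by
        gcongr
        exact integral_abs_const_add_mul_std_gaussianReal_le _ _

/-- Rounding the mean of a Gaussian down to the grid `ηℤ` and its variance down to
the grid `η²ℤ` moves it by at most `√2 · η` in the dual-form Wasserstein distance. -/
theorem gaussian_reference_rounding_bound
    (η m : ℝ) (v : ℝ≥0) (hη : 0 < η)
    (h : ℝ → ℝ) (hLip : LipschitzWith 1 h)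
    (h₁ : Integrable h (gaussianReal m v))
    (h₂ : Integrable h
      (gaussianReal (η * ⌊m / η⌋) (η ^ 2 * ⌊(v : ℝ) / η ^ 2⌋ : ℝ).toNNReal)) :
    |∫ x, h x ∂(gaussianReal m v) -
        ∫ x, h x ∂(gaussianReal (η * ⌊m / η⌋) (η ^ 2 * ⌊(v : ℝ) / η ^ 2⌋ : ℝ).toNNReal)| ≤
      Real.sqrt 2 * η := by
  set m' : ℝ := η * ⌊m / η⌋
  set v' : ℝ≥0 := (η ^ 2 * ⌊(v : ℝ) / η ^ 2⌋ : ℝ).toNNReal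
  have hmean : |m - m'| ≤ η := Int.abs_sub_mul_floor_div_le m hη
  have hvar : |(v : ℝ) - v'| ≤ η ^ 2 := by
    rw [Real.coe_toNNReal _ (by positivity)]
    exact Int.abs_sub_mul_floor_div_le _ (by positivity)
  have hsd : |√v - √v'| ≤ η :=
    (Real.abs_sqrt_sub_sqrt_le _ _).trans <| Real.sqrt_le_iff.2 ⟨hη.le, hvar⟩
  calc _ ≤ (1 : ℝ≥0) * √((m - m') ^ 2 + (√v - √v') ^ 2) :=
        abs_integral_gaussianReal_sub_integral_gaussianReal_le hLip h₁ h₂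
    _ ≤ √(η ^ 2 + η ^ 2) := by
        rw [NNReal.coe_one, one_mul]
        exact Real.sqrt_le_sqrt (add_le_add (sq_le_sq' (abs_le.1 hmean).1 (abs_le.1 hmean).2)
          (sq_le_sq' (abs_le.1 hsd).1 (abs_le.1 hsd).2))
    _ = √2 * η := by rw [← two_mul, Real.sqrt_mul zero_le_two, Real.sqrt_sq hη.le]
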